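/- Let x, y ∈ ℂ, n ∈ ℕ and 0 ≤ k ≤ n. Assume q^i x ≠ q^{−j−1} y for all integers i, j ≥ 0 with i + j ≤ k − 1 (so all denominators arising in the k iterations are nonzero). Then D_{xy}^k{ p_n(x,y) } = ((q;q)_n/(q;q)_{n−k}) · p_{n−k}(x,y). -/

import Mathlib

/-!
Since `p_{m+1}(q x, y) = q ^ (m + 1) p_{m+1}(x, y / q)` and
`p_{m+1}(x, y / q) = (x - y / q) p_m(x, y)`, one application of `D_{xy}` sends `p_{m+1}` to
`(1 - q ^ (m + 1)) p_m`. As `D_{xy} F` at `(x, y)` only sees `F` at `(x, y / q)` and `(q x, y)`,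
points that inherit the nonvanishing of the remaining denominators, induction on `k` gives
`D_{xy}^k p_{m+k} = (q^{m+1}; q)_k p_m`, and `(q; q)_{m+k} = (q; q)_m (q^{m+1}; q)_k` with
`(q; q)_m ≠ 0` for `|q| < 1`.
-/

noncomputable section

/-- The q-shifted factorial `(a;q)_n`. -/
def qPoch (q a : ℂ) (n : ℕ) : ℂ := ∏ j ∈ Finset.range n, (1 - a * q ^ j)

/-- The infinite q-shifted factorial `(a;q)_∞`. -/
def qPochInf (q a : ℂ) : ℂ := ∏' j : ℕ, (1 - a * q ^ j)

/-- The q-binomial coefficient `[n k]_q`. -/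
def qBinom (q : ℂ) (n k : ℕ) : ℂ := qPoch q q n / (qPoch q q k * qPoch q q (n - k))

/-- The Cauchy polynomials `p_n(x,y)`. -/
def cauchyP (q x y : ℂ) (n : ℕ) : ℂ := ∏ j ∈ Finset.range n, (x - q ^ j * y)

/-- The generalized q-binomial coefficient `[α k]_{-q}`. -/
def genQBinom (q α : ℂ) (k : ℕ) : ℂ :=
  qPoch q (-(q ^ (-α))) k / qPoch q (-q) k * q ^ (α * (k : ℂ) - (k.choose 2 : ℂ))

/-- The generalized q-polynomials `L̃_n^{(r,s)}(α,x,y,z,a)`. -/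
def Ltil (q : ℂ) (r s : ℤ) (α x y z a : ℂ) (n : ℕ) : ℂ :=
  ∑ k ∈ Finset.range (n + 1),
    qBinom q n k * genQBinom q α k *
      q ^ (r * (k.choose 2 : ℤ) - s * ((k + 1).choose 2 : ℤ) + (k.choose 2 : ℤ)) *
      qPoch q a k * cauchyP q x y (n - k) * z ^ k

/-- The basic hypergeometric series `₂Φ₁[a,b;c;q;z]`. -/
def Phi21 (q a b c z : ℂ) : ℂ :=
  ∑' n : ℕ, qPoch q a n * qPoch q b n / (qPoch q c n * qPoch q q n) * z ^ n

/-- The basic hypergeometric series `₄Φ₃`. -/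
def Phi43 (q a₁ a₂ a₃ a₄ b₁ b₂ b₃ z : ℂ) : ℂ :=
  ∑' n : ℕ, qPoch q a₁ n * qPoch q a₂ n * qPoch q a₃ n * qPoch q a₄ n /
    (qPoch q b₁ n * qPoch q b₂ n * qPoch q b₃ n * qPoch q q n) * z ^ n

/-- The trivariate q-polynomials `F_n(x,y,z;q)`. -/
def Ftri (q x y z : ℂ) (n : ℕ) : ℂ :=
  (-1) ^ n * q ^ (-(n.choose 2 : ℤ)) *
    ∑ k ∈ Finset.range (n + 1),
      qBinom q n k * q ^ (k.choose 2) * (-z) ^ k * cauchyP q y x (n - k)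

/-- The Hahn (Al-Salam–Carlitz) polynomials `φ_n^{(σ)}(x|q)`. -/
def hahnPhi (q σ x : ℂ) (n : ℕ) : ℂ :=
  ∑ k ∈ Finset.range (n + 1), qBinom q n k * qPoch q σ k * x ^ k

/-- The q-derivative operator `D_a`. -/
def Dq (q : ℂ) (f : ℂ → ℂ) : ℂ → ℂ := fun a => (f a - f (q * a)) / a

/-- The homogeneous q-difference operator `D_{xy}`. -/
def Dxy (q : ℂ) (f : ℂ → ℂ → ℂ) : ℂ → ℂ → ℂ :=
  fun x y => (f x (y / q) - f (q * x) y) / (x - y / q)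


lemma qPoch_add (q a : ℂ) (m k : ℕ) :
    qPoch q a (m + k) = qPoch q a m * qPoch q (a * q ^ m) k := by
  simp only [qPoch, Finset.prod_range_add, pow_add, mul_assoc]

lemma qPoch_succ' (q a : ℂ) (k : ℕ) : qPoch q a (k + 1) = (1 - a) * qPoch q (a * q) k := by
  rw [add_comm, qPoch_add, pow_one]
  simp [qPoch]

lemma qPoch_self_ne_zero {q : ℂ} (hq1 : ‖q‖ < 1) (n : ℕ) : qPoch q q n ≠ 0 := by
  refine Finset.prod_ne_zero_iff.2 fun j _ h => ?_
  have hnorm : ‖q * q ^ j‖ < 1 := by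
    rw [← pow_succ', norm_pow]
    exact pow_lt_one₀ (norm_nonneg q) hq1 j.succ_ne_zero
  rw [← sub_eq_zero.1 h, norm_one] at hnorm
  exact hnorm.false

lemma cauchyP_mul_left {q : ℂ} (hq0 : q ≠ 0) (x y : ℂ) (m : ℕ) :
    cauchyP q (q * x) y m = q ^ m * cauchyP q x (y / q) m := by
  rw [cauchyP, cauchyP, ← Finset.card_range m, ← Finset.prod_const, Finset.card_range,
    ← Finset.prod_mul_distrib]
  refine Finset.prod_congr rfl fun j _ => ?_
  field_simp

lemma cauchyP_div_succ {q : ℂ} (hq0 : q ≠ 0) (x y : ℂ) (m : ℕ) :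
    cauchyP q x (y / q) (m + 1) = (x - y / q) * cauchyP q x y m := by
  rw [cauchyP, Finset.prod_range_succ', mul_comm, pow_zero, one_mul]
  congr 1
  refine Finset.prod_congr rfl fun j _ => ?_
  rw [pow_succ]
  field_simp

lemma Dxy_cauchyP_succ {q : ℂ} (hq0 : q ≠ 0) {x y : ℂ} (hxy : x - y / q ≠ 0) (m : ℕ) :
    Dxy q (fun u w => cauchyP q u w (m + 1)) x y = (1 - q ^ (m + 1)) * cauchyP q x y m := by
  rw [Dxy, cauchyP_mul_left hq0, cauchyP_div_succ hq0, div_eq_iff hxy]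
  ring

lemma Dxy_apply_congr (q : ℂ) {F G : ℂ → ℂ → ℂ} {x y : ℂ}
    (h₁ : F x (y / q) = G x (y / q)) (h₂ : F (q * x) y = G (q * x) y) :
    Dxy q F x y = Dxy q G x y := by
  simp only [Dxy, h₁, h₂]

lemma Dxy_const_mul (q c : ℂ) (F : ℂ → ℂ → ℂ) (x y : ℂ) :
    Dxy q (fun u w => c * F u w) x y = c * Dxy q F x y := by
  simp only [Dxy, ← mul_sub, mul_div_assoc]

/-- The denominators `q ^ i * x - q ^ (-j - 1) * y` met in `k` iterations of `Dxy q` at `(x, y)`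
do not vanish. -/
def DxyNonsingular (q : ℂ) (k : ℕ) (x y : ℂ) : Prop :=
  ∀ i j : ℕ, i + j + 1 ≤ k → q ^ i * x ≠ q ^ (-(j : ℤ) - 1) * y

namespace DxyNonsingular

variable {q : ℂ} {k : ℕ} {x y : ℂ}

lemma sub_div_ne_zero (h : DxyNonsingular q (k + 1) x y) : x - y / q ≠ 0 := by
  have h₀ := h 0 0 (by omega)
  simp only [pow_zero, one_mul, Nat.cast_zero, neg_zero, zero_sub, zpow_neg_one] at h₀
  rwa [sub_ne_zero, div_eq_inv_mul]

lemma div_right (hq0 : q ≠ 0) (h : DxyNonsingular q (k + 1) x y) :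
    DxyNonsingular q k x (y / q) := by
  intro i j hij
  convert h i (j + 1) (by omega) using 1
  rw [Nat.cast_succ, show -((j : ℤ) + 1) - 1 = (-j - 1) + -1 by ring, zpow_add₀ hq0,
    zpow_neg_one]
  ring

lemma mul_left (h : DxyNonsingular q (k + 1) x y) : DxyNonsingular q k (q * x) y := by
  intro i j hij
  rw [← mul_assoc, ← pow_succ]
  exact h (i + 1) j (by omega)

end DxyNonsingular

theorem iterate_Dxy_cauchyP_add {q : ℂ} (hq0 : q ≠ 0) (k : ℕ) :
    ∀ (m : ℕ) {x y : ℂ}, DxyNonsingular q k x y →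
      ((Dxy q)^[k] (fun u w => cauchyP q u w (m + k))) x y =
        qPoch q (q ^ (m + 1)) k * cauchyP q x y m := by
  induction k with
  | zero => simp [qPoch]
  | succ k ih =>
    intro m x y h
    set c := qPoch q (q ^ (m + 2)) k
    have ih' : ∀ {u w : ℂ}, DxyNonsingular q k u w →
        ((Dxy q)^[k] (fun u w => cauchyP q u w (m + (k + 1)))) u w = c * cauchyP q u w (m + 1) :=
      fun huw => by
        rw [← add_assoc, add_right_comm]
        exact ih (m + 1) huw
    calc ((Dxy q)^[k + 1] (fun u w => cauchyP q u w (m + (k + 1)))) x y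
        = Dxy q (fun u w => c * cauchyP q u w (m + 1)) x y := by
          rw [Function.iterate_succ_apply']
          exact Dxy_apply_congr q (ih' (h.div_right hq0)) (ih' h.mul_left)
      _ = c * ((1 - q ^ (m + 1)) * cauchyP q x y m) := by
          rw [Dxy_const_mul, Dxy_cauchyP_succ hq0 h.sub_div_ne_zero]
      _ = qPoch q (q ^ (m + 1)) (k + 1) * cauchyP q x y m := by
          rw [qPoch_succ', ← pow_succ]
          ring

/-- Action of the iterated homogeneous q-difference operator on the
Cauchy polynomials. -/
theorem stmt12 (q : ℂ) (hq0 : q ≠ 0) (hq1 : ‖q‖ < 1) (x y : ℂ) (n k : ℕ) (hk : k ≤ n)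
    (hden : ∀ i j : ℕ, i + j + 1 ≤ k → q ^ i * x ≠ q ^ (-(j : ℤ) - 1) * y) :
    ((Dxy q)^[k] (fun u w => cauchyP q u w n)) x y =
      qPoch q q n / qPoch q q (n - k) * cauchyP q x y (n - k) := by
  obtain ⟨m, rfl⟩ := Nat.exists_eq_add_of_le' hk
  rw [Nat.add_sub_cancel, iterate_Dxy_cauchyP_add hq0 k m hden, qPoch_add, ← pow_succ',
    mul_div_cancel_left₀ _ (qPoch_self_ne_zero hq1 m)]

end
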